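/- Assume additionally that p_2, …, p_n are odd. Let y ∈ ℤ be such that at most n − 3 of the integers p_1, …, p_n divide y. Then there exists l = (l_1, …, l_n) ∈ L(p_1, …, p_n) such that y² ≡ (l_1 · P/p_1 + Σ_{j=2}^n 2 l_j · P/p_j)² (mod 4P). -/

import Mathlib

open scoped BigOperators

/-!
Put `m_1 = 2 p_1`, `m_j = p_j` for `j ≥ 2`, and let `a_j` be the coefficient of `l_j` in the sum
`z = l_1 P/p_1 + Σ 2 l_j P/p_j`. Then `a_j` is a unit modulo `m_j` while `m_j` divides every other
`a_k`, so `z ≡ l_j a_j (mod m_j)`. Choosing `l_j` as the representative of `± y / a_j` in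
`[0, m_j / 2]` gives `z ≡ ± y (mod m_j)` for every `j`, hence `p_j ∣ z² - y²` for `j ≥ 2` and
`4 p_1 ∣ (z - y)(z + y)` since both factors are even; the Chinese remainder theorem yields
`z² ≡ y² (mod 4P)`. A coordinate `l_j` can only vanish when `m_j ∣ y`, which happens for at most
`n - 3` indices.
-/

/-- The set `L(p_1,…,p_n)`: `0 ≤ l_1 ≤ p_1`, `0 ≤ l_j ≤ (p_j − 1)/2` for `j ≥ 2`, and
`l_j ≠ 0` for at least three indices. -/
def memL (n : ℕ) (hn : 0 < n) (p l : Fin n → ℤ) : Prop :=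
  (0 ≤ l ⟨0, hn⟩ ∧ l ⟨0, hn⟩ ≤ p ⟨0, hn⟩) ∧
    (∀ j : Fin n, j ≠ ⟨0, hn⟩ → 0 ≤ l j ∧ 2 * l j ≤ p j - 1) ∧
    3 ≤ Set.ncard {j : Fin n | l j ≠ 0}

open Finset

lemma exists_two_mul_le_dvd_sub_or_dvd_add (c : ℤ) {m : ℤ} (hm : 0 < m) :
    ∃ x, 0 ≤ x ∧ 2 * x ≤ m ∧ (m ∣ x - c ∨ m ∣ x + c) := by
  have hr0 : 0 ≤ c % m := Int.emod_nonneg _ hm.ne'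
  have hrm : c % m < m := Int.emod_lt_of_pos _ hm
  rcases le_or_gt (2 * (c % m)) m with hle | hgt
  · exact ⟨c % m, hr0, hle, Or.inl ⟨-(c / m), by rw [Int.emod_def]; ring⟩⟩
  · exact ⟨m - c % m, by linarith, by linarith, Or.inr ⟨1 + c / m, by rw [Int.emod_def]; ring⟩⟩

lemma exists_two_mul_le_dvd_mul_sub_or_dvd_mul_add {a m : ℤ} (h : IsCoprime a m) (hm : 0 < m)
    (b : ℤ) : ∃ x, 0 ≤ x ∧ 2 * x ≤ m ∧ (m ∣ x * a - b ∨ m ∣ x * a + b) := by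
  obtain ⟨u, v, huv⟩ := h
  obtain ⟨x, hx0, hxm, hx⟩ := exists_two_mul_le_dvd_sub_or_dvd_add (u * b) hm
  refine ⟨x, hx0, hxm, hx.imp (fun hd => ?_) (fun hd => ?_)⟩
  · rw [show x * a - b = (x - u * b) * a - m * (v * b) by linear_combination b * huv]
    exact dvd_sub (hd.mul_right a) (dvd_mul_right m _)
  · rw [show x * a + b = (x + u * b) * a + m * (v * b) by linear_combination (-b) * huv]
    exact dvd_add (hd.mul_right a) (dvd_mul_right m _)

lemma dvd_sum_mul_sub_or_dvd_sum_mul_add {ι : Type*} [Fintype ι] [DecidableEq ι] {d y : ℤ}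
    (a l : ι → ℤ) {j : ι} (h : ∀ k, k ≠ j → d ∣ a k)
    (hj : d ∣ l j * a j - y ∨ d ∣ l j * a j + y) :
    d ∣ ∑ k, l k * a k - y ∨ d ∣ ∑ k, l k * a k + y := by
  have hrest : d ∣ ∑ k, l k * a k - l j * a j := by
    rw [← add_sum_erase _ _ (mem_univ j), add_sub_cancel_left]
    exact dvd_sum fun k hk => (h k (ne_of_mem_erase hk)).mul_left _
  refine hj.imp (fun hd => ?_) (fun hd => ?_)
  · simpa only [sub_add_sub_cancel] using dvd_add hrest hd
  · simpa only [← add_assoc, sub_add_cancel] using dvd_add hrest hd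

lemma dvd_sq_sub_sq_of_dvd_sub_or_dvd_add {d z y : ℤ} (h : d ∣ z - y ∨ d ∣ z + y) :
    d ∣ z ^ 2 - y ^ 2 := by
  rw [sq_sub_sq]
  rcases h with h | h
  · exact h.mul_left _
  · exact h.mul_right _

lemma four_mul_dvd_sq_sub_sq {d z y : ℤ} (h : 2 * d ∣ z - y ∨ 2 * d ∣ z + y) :
    4 * d ∣ z ^ 2 - y ^ 2 := by
  have h2 : (2 : ℤ) ∣ z + y ↔ (2 : ℤ) ∣ z - y := by
    rw [show z + y = (z - y) + 2 * y by ring]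
    exact dvd_add_left (dvd_mul_right 2 y)
  rw [sq_sub_sq, show (4 : ℤ) * d = 2 * (2 * d) by ring]
  rcases h with h | h
  · exact mul_dvd_mul (h2.2 ((dvd_mul_right 2 d).trans h)) h
  · rw [mul_comm 2 (2 * d)]
    exact mul_dvd_mul h (h2.1 ((dvd_mul_right 2 d).trans h))

lemma le_ncard_of_compl_subset {α : Type*} [Finite α] {s t : Set α} {k : ℕ}
    (hs : s.ncard + k ≤ Nat.card α) (hst : sᶜ ⊆ t) : k ≤ t.ncard := by
  have := Set.ncard_add_ncard_compl s
  exact (by omega : k ≤ sᶜ.ncard).trans (Set.ncard_le_ncard hst)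

section TermModuli

variable {ι : Type*} [DecidableEq ι] (p : ι → ℤ) (i0 : ι)

-- `m_j` of the header, with `i0` playing the role of the index `1`.
def termModulus (j : ι) : ℤ := if j = i0 then 2 * p j else p j

lemma dvd_termModulus (j : ι) : p j ∣ termModulus p i0 j := by
  unfold termModulus
  split_ifs
  exacts [dvd_mul_left _ _, dvd_rfl]

lemma termModulus_pos (hp : ∀ j, 0 < p j) (j : ι) : 0 < termModulus p i0 j := by
  unfold termModulus
  split_ifs
  exacts [by linarith [hp j], hp j]

variable [Fintype ι]

def termCoeff (j : ι) : ℤ :=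
  if j = i0 then ∏ i ∈ univ.erase i0, p i else 2 * ∏ i ∈ univ.erase j, p i

lemma termModulus_dvd_termCoeff {j k : ι} (hjk : k ≠ j) :
    termModulus p i0 j ∣ termCoeff p i0 k := by
  have hj : j ∈ univ.erase k := mem_erase.2 ⟨hjk.symm, mem_univ j⟩
  unfold termModulus termCoeff
  split_ifs with hj0 hk0 hk0
  · exact absurd (hk0.trans hj0.symm) hjk
  · exact mul_dvd_mul_left 2 (dvd_prod_of_mem p hj)
  · exact dvd_prod_of_mem p (mem_erase.2 ⟨hj0, mem_univ j⟩)
  · exact (dvd_prod_of_mem p hj).mul_left 2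

variable {p}

lemma isCoprime_termCoeff_termModulus (hcop : ∀ i j, i ≠ j → IsCoprime (p i) (p j))
    (hodd : ∀ j, j ≠ i0 → Odd (p j)) (j : ι) :
    IsCoprime (termCoeff p i0 j) (termModulus p i0 j) := by
  unfold termCoeff termModulus
  split_ifs with hj
  · subst hj
    refine IsCoprime.prod_left fun i hi => ?_
    have hi0 := ne_of_mem_erase hi
    exact (Int.isCoprime_two_right.2 (hodd i hi0)).mul_right (hcop i j hi0)
  · exact (Int.isCoprime_two_left.2 (hodd j hj)).mul_left
      (IsCoprime.prod_left fun i hi => hcop i j (ne_of_mem_erase hi))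

lemma four_mul_prod_dvd_sq_sub_sq (hcop : ∀ i j, i ≠ j → IsCoprime (p i) (p j))
    (hodd : ∀ j, j ≠ i0 → Odd (p j)) {z y : ℤ}
    (h : ∀ j, termModulus p i0 j ∣ z - y ∨ termModulus p i0 j ∣ z + y) :
    4 * ∏ j, p j ∣ z ^ 2 - y ^ 2 := by
  rw [← mul_prod_erase univ p (mem_univ i0), ← mul_assoc]
  refine IsCoprime.mul_dvd ?_ (four_mul_dvd_sq_sub_sq (by simpa [termModulus] using h i0)) ?_
  · refine IsCoprime.prod_right fun i hi => ?_
    have hi0 := ne_of_mem_erase hi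
    have h4 : IsCoprime (4 : ℤ) (p i) := by
      simpa using (Int.isCoprime_two_left.2 (hodd i hi0)).pow_left (m := 2)
    exact h4.mul_left (hcop i0 i hi0.symm)
  · refine prod_dvd_of_coprime (fun i _ j _ hij => hcop i j hij) fun j hj => ?_
    exact dvd_sq_sub_sq_of_dvd_sub_or_dvd_add
      (by simpa [termModulus, ne_of_mem_erase hj] using h j)

variable (p)

lemma sum_mul_termCoeff (l : ι → ℤ) :
    l i0 * ∏ i ∈ univ.erase i0, p i + ∑ j ∈ univ.erase i0, 2 * l j * ∏ i ∈ univ.erase j, p i =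
      ∑ j, l j * termCoeff p i0 j := by
  rw [← add_sum_erase _ _ (mem_univ i0)]
  congr 1
  · simp [termCoeff]
  · refine sum_congr rfl fun j hj => ?_
    rw [termCoeff, if_neg (ne_of_mem_erase hj)]
    ring

end TermModuli

theorem statement4 (n : ℕ) (hn : 3 ≤ n) (p : Fin n → ℤ)
    (hp2 : ∀ j, 2 ≤ p j)
    (hpcop : ∀ i j : Fin n, i ≠ j → IsCoprime (p i) (p j))
    (hpodd : ∀ j : Fin n, j ≠ ⟨0, by omega⟩ → Odd (p j))
    (y : ℤ)
    (hy : Set.ncard {j : Fin n | p j ∣ y} ≤ n - 3) :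
    ∃ l : Fin n → ℤ, memL n (by omega) p l ∧
      Int.ModEq (4 * ∏ j, p j) (y ^ 2)
        ((l ⟨0, by omega⟩ * ∏ i ∈ Finset.univ.erase (⟨0, by omega⟩ : Fin n), p i +
            ∑ j ∈ Finset.univ.erase (⟨0, by omega⟩ : Fin n),
              2 * l j * ∏ i ∈ Finset.univ.erase j, p i) ^ 2) := by
  set i0 : Fin n := ⟨0, by omega⟩
  have hpos : ∀ j, 0 < p j := fun j => by linarith [hp2 j]
  choose l hl0 hlm hly using fun j => exists_two_mul_le_dvd_mul_sub_or_dvd_mul_add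
    (isCoprime_termCoeff_termModulus i0 hpcop hpodd j) (termModulus_pos p i0 hpos j) y
  have hz : ∀ j, termModulus p i0 j ∣ ∑ k, l k * termCoeff p i0 k - y ∨
      termModulus p i0 j ∣ ∑ k, l k * termCoeff p i0 k + y := fun j =>
    dvd_sum_mul_sub_or_dvd_sum_mul_add _ l (fun k hk => termModulus_dvd_termCoeff p i0 hk) (hly j)
  refine ⟨l, ⟨⟨hl0 i0, ?_⟩, fun j hj => ⟨hl0 j, ?_⟩, ?_⟩, ?_⟩
  · linarith [show 2 * l i0 ≤ 2 * p i0 by simpa [termModulus] using hlm i0]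
  · obtain ⟨k, hk⟩ := hpodd j hj
    have := hlm j
    rw [termModulus, if_neg hj] at this
    omega
  · refine le_ncard_of_compl_subset (s := {j | p j ∣ y}) (by rw [Nat.card_fin]; omega) fun j hj hlj => hj ?_
    have hmy : termModulus p i0 j ∣ y := by
      rcases hly j with h | h <;> simpa [show l j = 0 from hlj] using h
    exact (dvd_termModulus p i0 j).trans hmy
  · rw [sum_mul_termCoeff, Int.modEq_iff_dvd]
    exact four_mul_prod_dvd_sq_sub_sq i0 hpcop hpodd hz
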